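/- arXiv:2304.13405 — 8 statements merged into one kernel-verified Lean document; each statement's English description precedes it below -/
import Mathlib

section
/- For the allocation of goods, the maximin share is monotone under removing equally many agents and items: if N' ⊆ N, M' ⊆ M, and |N \ N'| = |M \ M'|, then MMS_i(N', M') ≥ MMS_i(N, M) for every agent i ∈ N'. -/
open Finset

/-- Additive value/cost of a bundle of items. -/
def bundleVal {ι : Type*} (v : ι → ℝ) (S : Finset ι) : ℝ := ∑ e ∈ S, v e

/-- `X` is an `n`-partition of the item set `M`. -/
def IsPartition {ι : Type*} [DecidableEq ι] {n : ℕ} (M : Finset ι) (X : Fin n → Finset ι) : Prop :=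
  (Pairwise fun i j => Disjoint (X i) (X j)) ∧ Finset.univ.biUnion X = M

/-- Maximin share for goods: the max over `n`-partitions of the minimum bundle value. -/
noncomputable def MMSgoods {ι : Type*} [DecidableEq ι] (n : ℕ) (M : Finset ι) (v : ι → ℝ) : ℝ :=
  sSup {x : ℝ | ∃ X : Fin n → Finset ι, IsPartition M X ∧
    x = sInf (Set.range fun j => bundleVal v (X j))}

/-- Maximin share for chores: the min over `n`-partitions of the maximum bundle cost. -/
noncomputable def MMSchores {ι : Type*} [DecidableEq ι] (n : ℕ) (M : Finset ι) (c : ι → ℝ) : ℝ :=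
  sInf {x : ℝ | ∃ X : Fin n → Finset ι, IsPartition M X ∧
    x = sSup (Set.range fun j => bundleVal c (X j))}
lemma bundleVal_mono {ι : Type*} [DecidableEq ι] {v : ι → ℝ} {S T : Finset ι}
    (h : S ⊆ T) (hv : ∀ e ∈ T, 0 ≤ v e) : bundleVal v S ≤ bundleVal v T :=
  Finset.sum_le_sum_of_subset_of_nonneg h (fun i hi _ => hv i hi)

lemma trivial_partition {ι : Type*} [DecidableEq ι] {n : ℕ} (hn : 0 < n) (M : Finset ι) :
    IsPartition M (fun j : Fin n => if j = ⟨0, hn⟩ then M else ∅) := by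
  constructor
  · intro i j hij
    by_cases hi : i = ⟨0, hn⟩ <;> by_cases hj : j = ⟨0, hn⟩ <;> simp_all
  · ext x
    simp only [Finset.mem_biUnion, Finset.mem_univ, true_and]
    constructor
    · rintro ⟨j, hj⟩
      by_cases h : j = ⟨0, hn⟩ <;> simp_all
    · intro hx
      exact ⟨⟨0, hn⟩, by simp [hx]⟩

lemma key_lemma {ι : Type*} [DecidableEq ι] {n k : ℕ} (hk : 0 < k) (hkn : k ≤ n)
    {M M' : Finset ι} (hM : M' ⊆ M) (v : ι → ℝ) (hv : ∀ e ∈ M, 0 ≤ v e)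
    (hcard : n - k = (M \ M').card)
    (X : Fin n → Finset ι) (hX : IsPartition M X) :
    ∃ Y : Fin k → Finset ι, IsPartition M' Y ∧
      sInf (Set.range fun j => bundleVal v (X j)) ≤
        sInf (Set.range fun j => bundleVal v (Y j)) := by
  classical
  have hn : 0 < n := lt_of_lt_of_le hk hkn
  have hXM : ∀ j, X j ⊆ M := by
    intro j x hx
    rw [← hX.2]
    exact Finset.mem_biUnion.2 ⟨j, Finset.mem_univ j, hx⟩
  set D := M \ M' with hD
  -- the set of indices whose bundle avoids D
  set T : Finset (Fin n) := Finset.univ.filter (fun j => Disjoint (X j) D) with hT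
  set bad : Finset (Fin n) := Finset.univ.filter (fun j => ¬ Disjoint (X j) D) with hbad
  -- surjection from D onto bad
  have hbadcard : bad.card ≤ D.card := by
    have hinst : Nonempty (Fin n) := ⟨⟨0, hn⟩⟩
    set f : ι → Fin n := fun d => if hd : ∃ j, d ∈ X j then hd.choose else ⟨0, hn⟩ with hf
    apply Finset.card_le_card_of_surjOn f
    intro j hj
    rw [hbad, Finset.mem_coe, Finset.mem_filter] at hj
    obtain ⟨d, hd⟩ := Finset.not_disjoint_iff_nonempty_inter.1 hj.2
    rw [Finset.mem_inter] at hd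
    refine ⟨d, hd.2, ?_⟩
    have hex : ∃ j, d ∈ X j := ⟨j, hd.1⟩
    have : d ∈ X hex.choose := hex.choose_spec
    have heq : hex.choose = j := by
      by_contra hne
      simpa using (hX.1 hne).le_bot (Finset.mem_inter.2 ⟨this, hd.1⟩)
    simp [hf, hex, heq]
  have hTcard : k ≤ T.card := by
    have hsum : T.card + bad.card = n := by
      rw [hT, hbad]
      rw [Finset.card_filter_add_card_filter_not]
      simp
    omega
  obtain ⟨T', hT'sub, hT'card⟩ := Finset.exists_subset_card_eq hTcard
  set g : Fin k → Fin n := fun j => T'.orderEmbOfFin hT'card j with hg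
  have hginj : Function.Injective g := (T'.orderEmbOfFin hT'card).injective
  have hgmem : ∀ j, g j ∈ T := fun j => hT'sub (T'.orderEmbOfFin_mem hT'card j)
  have hgdisj : ∀ j, Disjoint (X (g j)) D := by
    intro j
    have := hgmem j
    rw [hT, Finset.mem_filter] at this
    exact this.2
  have hgM' : ∀ j, X (g j) ⊆ M' := by
    intro j x hx
    have hxM : x ∈ M := hXM _ hx
    by_contra hxM'
    simpa using (hgdisj j).le_bot (Finset.mem_inter.2 ⟨hx, Finset.mem_sdiff.2 ⟨hxM, hxM'⟩⟩)
  set j0 : Fin k := ⟨0, hk⟩ with hj0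
  set B : Finset ι := (Finset.univ.erase j0).biUnion (fun j => X (g j)) with hB
  set Y : Fin k → Finset ι := fun j => if j = j0 then M' \ B else X (g j) with hY
  have hYsub : ∀ j, Y j ⊆ M' := by
    intro j
    rw [hY]
    by_cases h : j = j0
    · simp [h, Finset.sdiff_subset]
    · simpa [h] using hgM' j
  have hdisjB : ∀ j, j ≠ j0 → X (g j) ⊆ B := by
    intro j hj x hx
    exact Finset.mem_biUnion.2 ⟨j, Finset.mem_erase.2 ⟨hj, Finset.mem_univ j⟩, hx⟩
  have hPart : IsPartition M' Y := by
    constructor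
    · intro i j hij
      rw [hY]
      by_cases hi : i = j0
      · have hj : j ≠ j0 := fun h => hij (h ▸ hi)
        simp only [hi, if_pos rfl, if_neg hj]
        exact Finset.disjoint_of_subset_right (hdisjB j hj) Finset.sdiff_disjoint
      · by_cases hj : j = j0
        · simp only [hj, if_pos rfl, if_neg hi]
          exact (Finset.disjoint_of_subset_right (hdisjB i hi) Finset.sdiff_disjoint).symm
        · simp only [if_neg hi, if_neg hj]
          exact hX.1 (fun h => hij (hginj h))
    · apply Finset.Subset.antisymm
      · intro x hx
        obtain ⟨j, _, hj⟩ := Finset.mem_biUnion.1 hx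
        exact hYsub j hj
      · intro x hx
        by_cases hxB : x ∈ B
        · obtain ⟨j, hjm, hj⟩ := Finset.mem_biUnion.1 hxB
          refine Finset.mem_biUnion.2 ⟨j, Finset.mem_univ j, ?_⟩
          rw [hY]
          simp only [if_neg (Finset.mem_erase.1 hjm).1]
          exact hj
        · refine Finset.mem_biUnion.2 ⟨j0, Finset.mem_univ j0, ?_⟩
          rw [hY]
          simp only [if_pos rfl]
          exact Finset.mem_sdiff.2 ⟨hx, hxB⟩
  refine ⟨Y, hPart, ?_⟩
  haveI : Nonempty (Fin k) := ⟨⟨0, hk⟩⟩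
  have hbdd : BddBelow (Set.range fun j => bundleVal v (X j)) :=
    (Set.finite_range _).bddBelow
  apply le_csInf (Set.range_nonempty _)
  rintro b ⟨j, rfl⟩
  by_cases hj : j = j0
  · have h1 : sInf (Set.range fun j => bundleVal v (X j)) ≤ bundleVal v (X (g j0)) :=
      csInf_le hbdd ⟨g j0, rfl⟩
    have h2 : X (g j0) ⊆ Y j0 := by
      intro x hx
      rw [hY]
      simp only [if_pos rfl]
      refine Finset.mem_sdiff.2 ⟨hgM' j0 hx, ?_⟩
      intro hxB
      obtain ⟨i, him, hi⟩ := Finset.mem_biUnion.1 hxB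
      have hne : g i ≠ g j0 := fun h => (Finset.mem_erase.1 him).1 (hginj h)
      simpa using (hX.1 hne).le_bot (Finset.mem_inter.2 ⟨hi, hx⟩)
    have h3 : bundleVal v (X (g j0)) ≤ bundleVal v (Y j0) :=
      bundleVal_mono h2 (fun e he => hv e (hM (hYsub j0 he)))
    show sInf _ ≤ bundleVal v (Y j)
    rw [hj]
    exact le_trans h1 h3
  · show sInf _ ≤ bundleVal v (Y j)
    have : Y j = X (g j) := by rw [hY]; simp [hj]
    rw [this]
    exact csInf_le hbdd ⟨g j, rfl⟩

theorem stmt3 {ι : Type*} [DecidableEq ι] (n k : ℕ) (hk : 0 < k) (hkn : k ≤ n)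
    (M M' : Finset ι) (hM : M' ⊆ M) (v : ι → ℝ) (hv : ∀ e ∈ M, 0 ≤ v e)
    (hcard : n - k = (M \ M').card) :
    MMSgoods n M v ≤ MMSgoods k M' v := by
  classical
  have hn : 0 < n := lt_of_lt_of_le hk hkn
  set Bset := {x : ℝ | ∃ X : Fin k → Finset ι, IsPartition M' X ∧
    x = sInf (Set.range fun j => bundleVal v (X j))} with hBset
  have hbddB : BddAbove Bset := by
    refine ⟨bundleVal v M', ?_⟩
    rintro x ⟨X, hXp, rfl⟩
    have hXM' : ∀ j, X j ⊆ M' := by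
      intro j y hy
      rw [← hXp.2]
      exact Finset.mem_biUnion.2 ⟨j, Finset.mem_univ j, hy⟩
    have h1 : sInf (Set.range fun j => bundleVal v (X j)) ≤ bundleVal v (X ⟨0, hk⟩) :=
      csInf_le (Set.finite_range _).bddBelow ⟨⟨0, hk⟩, rfl⟩
    exact le_trans h1 (bundleVal_mono (hXM' _) (fun e he => hv e (hM he)))
  haveI : Nonempty (Fin k) := ⟨⟨0, hk⟩⟩
  have hnonnegB : 0 ≤ sSup Bset := by
    have hmem : sInf (Set.range fun j : Fin k =>
        bundleVal v ((fun j : Fin k => if j = ⟨0, hk⟩ then M' else ∅) j)) ∈ Bset :=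
      ⟨_, trivial_partition hk M', rfl⟩
    refine le_trans ?_ (le_csSup hbddB hmem)
    apply le_csInf (Set.range_nonempty _)
    rintro b ⟨j, rfl⟩
    by_cases hj : j = ⟨0, hk⟩
    · simp only [hj, if_pos rfl]
      exact Finset.sum_nonneg (fun e he => hv e (hM he))
    · simp [bundleVal, hj]
  rw [MMSgoods, MMSgoods, ← hBset]
  apply Real.sSup_le _ hnonnegB
  rintro x ⟨X, hXp, rfl⟩
  obtain ⟨Y, hYp, hle⟩ := key_lemma hk hkn hM v hv hcard X hXp
  exact le_trans hle (le_csSup hbddB ⟨Y, hYp, rfl⟩)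
end

section
/- Key claim in the 1/2 lower bound for two agents: if a deterministic online algorithm is (1/2 + δ)-competitive for goods with two agents (δ > 0), then at any point where the current partial allocation (X_1, X_2) satisfies v_1(X_1 ∪ X_2) ≤ 1 and v_2(X_1 ∪ X_2) ≤ 1, there must exist an agent i with v_i(X_i) > (1+δ)·v_i(X_{3-i}). Equivalently (contrapositive, as a static statement): if v_i(X_i) ≤ (1+δ)·v_i(X_j) for both i and v_i(X_1 ∪ X_2) ≤ 1 for both i, then for the instance obtained by appending one final item e with v_i(e) = 2 − v_i(X_1 ∪ X_2), the agent not receiving e gets value at most ((1+δ)/(2+δ))·MMS_i < (1/2 + δ)·MMS_i. -/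
open Finset

theorem mms_ge {ι : Type*} [DecidableEq ι] (X : Fin 2 → Finset ι) (e : ι)
    (he : e ∉ X 0 ∪ X 1) (v : ι → ℝ) (hv : ∀ x ∈ X 0 ∪ X 1, 0 ≤ v x)
    (hve : v e = 2 - bundleVal v (X 0 ∪ X 1))
    (hsmall : bundleVal v (X 0 ∪ X 1) ≤ 1) :
    bundleVal v (X 0 ∪ X 1) ≤ MMSgoods 2 (insert e (X 0 ∪ X 1)) v := by
  have hvM : ∀ x ∈ insert e (X 0 ∪ X 1), 0 ≤ v x := by
    intro x hx
    rcases Finset.mem_insert.mp hx with h | h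
    · subst h; rw [hve]; linarith
    · exact hv x h
  have hMval : bundleVal v (insert e (X 0 ∪ X 1)) = 2 := by
    simp only [bundleVal]
    rw [Finset.sum_insert he, hve]
    simp only [bundleVal]; ring
  have hbdd : BddAbove {x : ℝ | ∃ Y : Fin 2 → Finset ι, IsPartition (insert e (X 0 ∪ X 1)) Y ∧
      x = sInf (Set.range fun j => bundleVal v (Y j))} := by
    refine ⟨2, ?_⟩
    rintro x ⟨Y, ⟨hpw, hcov⟩, rfl⟩
    have hsub : Y 0 ⊆ insert e (X 0 ∪ X 1) := by
      rw [← hcov]; intro a ha; exact Finset.mem_biUnion.mpr ⟨0, Finset.mem_univ _, ha⟩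
    have h0 : bundleVal v (Y 0) ≤ 2 := by
      rw [← hMval]
      exact Finset.sum_le_sum_of_subset_of_nonneg hsub (fun x hx _ => hvM x hx)
    calc sInf (Set.range fun j => bundleVal v (Y j)) ≤ bundleVal v (Y 0) :=
          csInf_le (Set.finite_range _).bddBelow ⟨0, rfl⟩
      _ ≤ 2 := h0
  apply le_csSup hbdd
  refine ⟨![{e}, X 0 ∪ X 1], ⟨?_, ?_⟩, ?_⟩
  · intro i j hij
    have hd : Disjoint ({e} : Finset ι) (X 0 ∪ X 1) := by
      simpa [Finset.disjoint_singleton_left] using he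
    fin_cases i <;> fin_cases j <;> simp_all [hd.symm]
  · ext a
    simp only [Fin.exists_fin_two, Finset.mem_biUnion, Finset.mem_univ, true_and,
      Matrix.cons_val_zero, Matrix.cons_val_one, Matrix.head_cons, Finset.mem_singleton,
      Finset.mem_insert, Finset.mem_union]
  · have hrange : (Set.range fun j : Fin 2 => bundleVal v (![{e}, X 0 ∪ X 1] j))
        = {bundleVal v {e}, bundleVal v (X 0 ∪ X 1)} := by
      ext x
      simp only [Set.mem_range, Fin.exists_fin_two, Matrix.cons_val_zero, Matrix.cons_val_one,
        Matrix.head_cons, Set.mem_insert_iff, Set.mem_singleton_iff, eq_comm]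
    rw [hrange, csInf_pair]
    have he2 : bundleVal v {e} = 2 - bundleVal v (X 0 ∪ X 1) := by simp [bundleVal, hve]
    rw [he2, min_eq_right (by linarith)]

theorem stmt7 {ι : Type*} [DecidableEq ι] (δ : ℝ) (hδ : 0 < δ)
    (X : Fin 2 → Finset ι) (e : ι) (he : e ∉ X 0 ∪ X 1)
    (hdisj : Disjoint (X 0) (X 1))
    (v : Fin 2 → ι → ℝ) (hv : ∀ i, ∀ x ∈ X 0 ∪ X 1, 0 ≤ v i x)
    (hve : ∀ i, v i e = 2 - bundleVal (v i) (X 0 ∪ X 1))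
    (hbal : ∀ i j : Fin 2, i ≠ j → bundleVal (v i) (X i) ≤ (1 + δ) * bundleVal (v i) (X j))
    (hsmall : ∀ i, bundleVal (v i) (X 0 ∪ X 1) ≤ 1) :
    (∀ i : Fin 2, bundleVal (v i) (X i) ≤
        ((1 + δ) / (2 + δ)) * MMSgoods 2 (insert e (X 0 ∪ X 1)) (v i)) ∧
    (1 + δ) / (2 + δ) < 1/2 + δ := by
  have h2 : (0:ℝ) < 2 + δ := by linarith
  have hsplit : ∀ i, bundleVal (v i) (X 0) + bundleVal (v i) (X 1)
      = bundleVal (v i) (X 0 ∪ X 1) := by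
    intro i
    simp only [bundleVal]
    rw [Finset.sum_union hdisj]
  constructor
  · intro i
    have hmms : bundleVal (v i) (X 0 ∪ X 1) ≤ MMSgoods 2 (insert e (X 0 ∪ X 1)) (v i) :=
      mms_ge X e he (v i) (hv i) (hve i) (hsmall i)
    have hab : bundleVal (v i) (X i) ≤ ((1 + δ) / (2 + δ)) * bundleVal (v i) (X 0 ∪ X 1) := by
      fin_cases i <;> simp only [Fin.mk_zero, Fin.mk_one, Fin.isValue] <;>
        rw [div_mul_eq_mul_div, le_div_iff₀ h2]
      · have hb := hbal 0 1 (by decide)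
        have hs := hsplit 0
        nlinarith
      · have hb := hbal 1 0 (by decide)
        have hs := hsplit 1
        nlinarith
    have hc : (0:ℝ) ≤ (1 + δ) / (2 + δ) := by positivity
    calc bundleVal (v i) (X i)
        ≤ ((1 + δ) / (2 + δ)) * bundleVal (v i) (X 0 ∪ X 1) := hab
      _ ≤ ((1 + δ) / (2 + δ)) * MMSgoods 2 (insert e (X 0 ∪ X 1)) (v i) :=
          mul_le_mul_of_nonneg_left hmms hc
  · rw [div_lt_iff₀ (by linarith)]
    nlinarith [sq_nonneg δ]
end

section
/- Greedy-with-inactivation guarantee for chores: let (X_1, …, X_n) be a partition of chores M among n agents with additive costs c_i normalized so c_i(M) = n. Suppose: (a) for each agent i there is a distinguished last item e_i ∈ X_i (when X_i ≠ ∅) such that c_i(X_i \ {e_i}) < 1 − 1/n; and (b) there is at most one agent i* with c_{i*}(X_{i*}) < 1 − 1/n at the end, and for every j ≠ i* and every e ∈ X_j, c_j(e) ≤ c_{i*}(e). Then c_i(X_i) ≤ (2 − 1/n)·MMS_i for every agent i. -/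
open Finset

lemma partSum {ι : Type*} [DecidableEq ι] {n : ℕ} {M : Finset ι} {Y : Fin n → Finset ι}
    (hY : IsPartition M Y) (c : ι → ℝ) : ∑ j, bundleVal c (Y j) = bundleVal c M := by
  obtain ⟨hdisj, hun⟩ := hY
  rw [← hun, bundleVal, Finset.sum_biUnion (fun a _ b _ hab => hdisj hab)]
  rfl

lemma maxGe {ι : Type*} [DecidableEq ι] {n : ℕ} (hn : 0 < n) {M : Finset ι}
    {Y : Fin n → Finset ι} (hY : IsPartition M Y) {c : ι → ℝ}
    (hc : ∀ e ∈ M, 0 ≤ c e) (hnorm : bundleVal c M = n) :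
    1 ≤ sSup (Set.range fun j => bundleVal c (Y j)) ∧
    ∀ e ∈ M, c e ≤ sSup (Set.range fun j => bundleVal c (Y j)) := by
  have hbdd : BddAbove (Set.range fun j => bundleVal c (Y j)) :=
    (Set.finite_range _).bddAbove
  constructor
  · have : ∃ j : Fin n, 1 ≤ bundleVal c (Y j) := by
      by_contra h
      push_neg at h
      have := Finset.sum_lt_sum_of_nonempty (Finset.univ_nonempty_iff.2 ⟨⟨0, hn⟩⟩)
        (fun j _ => h j)
      rw [partSum hY, hnorm] at this
      simp at this
    obtain ⟨j, hj⟩ := this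
    exact hj.trans (le_csSup hbdd ⟨j, rfl⟩)
  · intro e he
    rw [← hY.2] at he
    obtain ⟨j, _, hj⟩ := Finset.mem_biUnion.1 he
    have : c e ≤ bundleVal c (Y j) := by
      apply Finset.single_le_sum (f := c) _ hj
      intro x hx
      exact hc x (by rw [← hY.2]; exact Finset.mem_biUnion.2 ⟨j, Finset.mem_univ j, hx⟩)
    exact this.trans (le_csSup hbdd ⟨j, rfl⟩)

lemma mmsLB {ι : Type*} [DecidableEq ι] {n : ℕ} (hn : 0 < n) {M : Finset ι}
    {X : Fin n → Finset ι} (hX : IsPartition M X) {c : ι → ℝ}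
    (hc : ∀ e ∈ M, 0 ≤ c e) (hnorm : bundleVal c M = n) :
    1 ≤ MMSchores n M c ∧ ∀ e ∈ M, c e ≤ MMSchores n M c := by
  have hne : {x : ℝ | ∃ Y : Fin n → Finset ι, IsPartition M Y ∧
      x = sSup (Set.range fun j => bundleVal c (Y j))}.Nonempty := ⟨_, X, hX, rfl⟩
  constructor
  · apply le_csInf hne
    rintro x ⟨Y, hY, rfl⟩
    exact (maxGe hn hY hc hnorm).1
  · intro e he
    apply le_csInf hne
    rintro x ⟨Y, hY, rfl⟩
    exact (maxGe hn hY hc hnorm).2 e he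

theorem stmt8 {ι : Type*} [DecidableEq ι] (n : ℕ) (hn : 0 < n)
    (M : Finset ι) (X : Fin n → Finset ι) (hpart : IsPartition M X)
    (c : Fin n → ι → ℝ) (hc : ∀ i, ∀ e ∈ M, 0 ≤ c i e)
    (hnorm : ∀ i, bundleVal (c i) M = n)
    (hlast : ∀ i, (X i).Nonempty →
      ∃ e ∈ X i, bundleVal (c i) ((X i).erase e) < 1 - 1/(n : ℝ))
    (istar : Fin n)
    (hbig : ∀ j, j ≠ istar → 1 - 1/(n : ℝ) ≤ bundleVal (c j) (X j))
    (hgreedy : ∀ j, j ≠ istar → ∀ e ∈ X j, c j e ≤ c istar e) :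
    ∀ i, bundleVal (c i) (X i) ≤ (2 - 1/(n : ℝ)) * MMSchores n M (c i) := by
  intro i
  obtain ⟨hm1, hme⟩ := mmsLB hn hpart (hc i) (hnorm i)
  have hn1 : 1/(n : ℝ) ≤ 1 := by
    rw [div_le_one (by exact_mod_cast hn)]
    exact_mod_cast hn
  rcases Finset.eq_empty_or_nonempty (X i) with h | h
  · have h0 : bundleVal (c i) (∅ : Finset ι) = 0 := by simp [bundleVal]
    rw [h, h0]
    nlinarith
  · obtain ⟨e, heX, hle⟩ := hlast i h
    have heM : e ∈ M := by
      rw [← hpart.2]; exact Finset.mem_biUnion.2 ⟨i, Finset.mem_univ i, heX⟩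
    have hsplit : bundleVal (c i) (X i) = bundleVal (c i) ((X i).erase e) + c i e := by
      rw [bundleVal, bundleVal, Finset.sum_erase_add _ _ heX]
    have hce := hme e heM
    nlinarith [hce, hm1, hle, hsplit]
end

section
/- In the (2 − 1/n)-competitive algorithm analysis for chores: suppose agent i and partition (X_1, …, X_n) of M satisfy c_i(X_j) ≥ c_j(X_j) ≥ 1 − 1/n for all j ≠ i, and c_i(M) = n. Then c_i(X_i) ≤ 2 − 1/n ≤ (2 − 1/n)·MMS_i. -/
open Finset

lemma sum_bundleVal_of_partition {ι : Type*} [DecidableEq ι] {n : ℕ}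
    {M : Finset ι} {X : Fin n → Finset ι} (h : IsPartition M X) (v : ι → ℝ) :
    ∑ j, bundleVal v (X j) = bundleVal v M := by
  rw [← h.2, bundleVal, Finset.sum_biUnion]
  · rfl
  · intro a _ b _ hab
    exact h.1 hab

theorem stmt10 {ι : Type*} [DecidableEq ι] (n : ℕ) (hn : 0 < n)
    (M : Finset ι) (X : Fin n → Finset ι) (hpart : IsPartition M X)
    (c : Fin n → ι → ℝ) (i : Fin n)
    (hci : ∀ e ∈ M, 0 ≤ c i e) (hnorm : bundleVal (c i) M = n)
    (hothers : ∀ j, j ≠ i →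
      1 - 1/(n : ℝ) ≤ bundleVal (c j) (X j) ∧
      bundleVal (c j) (X j) ≤ bundleVal (c i) (X j)) :
    bundleVal (c i) (X i) ≤ 2 - 1/(n : ℝ) ∧
      2 - 1/(n : ℝ) ≤ (2 - 1/(n : ℝ)) * MMSchores n M (c i) := by
  have hn1 : (1 : ℝ) ≤ (n : ℝ) := by exact_mod_cast hn
  have hnpos : (0 : ℝ) < n := by exact_mod_cast hn
  constructor
  · have hsum : ∑ j, bundleVal (c i) (X j) = n := by
      rw [sum_bundleVal_of_partition hpart, hnorm]
    have hsplit : bundleVal (c i) (X i) + ∑ j ∈ univ.erase i, bundleVal (c i) (X j) = n := by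
      rw [← hsum]
      exact Finset.add_sum_erase univ (fun j => bundleVal (c i) (X j)) (mem_univ i)
    have hlow : ((n : ℝ) - 1) * (1 - 1/(n : ℝ)) ≤ ∑ j ∈ univ.erase i, bundleVal (c i) (X j) := by
      calc ((n : ℝ) - 1) * (1 - 1/(n : ℝ))
          = ∑ _j ∈ univ.erase i, (1 - 1/(n : ℝ)) := by
            rw [Finset.sum_const, Finset.card_erase_of_mem (mem_univ i), card_univ,
              Fintype.card_fin, nsmul_eq_mul]
            rw [Nat.cast_sub hn, Nat.cast_one]
        _ ≤ _ := by
            apply Finset.sum_le_sum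
            intro j hj
            have hji : j ≠ i := (Finset.mem_erase.mp hj).1
            exact (hothers j hji).1.trans (hothers j hji).2
    have hinv : (n : ℝ) * (1/(n : ℝ)) = 1 := by field_simp
    nlinarith [hsplit, hlow]
  · have hMMS : 1 ≤ MMSchores n M (c i) := by
      have hne : {x : ℝ | ∃ X' : Fin n → Finset ι, IsPartition M X' ∧
          x = sSup (Set.range fun j => bundleVal (c i) (X' j))}.Nonempty :=
        ⟨_, X, hpart, rfl⟩
      apply le_csInf hne
      rintro x ⟨X', hX', rfl⟩
      -- some bundle has value ≥ 1
      have hsum : ∑ j, bundleVal (c i) (X' j) = n := by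
        rw [sum_bundleVal_of_partition hX', hnorm]
      haveI : Nonempty (Fin n) := ⟨⟨0, hn⟩⟩
      have hex : ∃ j : Fin n, 1 ≤ bundleVal (c i) (X' j) := by
        by_contra h
        push_neg at h
        have : ∑ j, bundleVal (c i) (X' j) < ∑ _j : Fin n, (1 : ℝ) := by
          apply Finset.sum_lt_sum_of_nonempty
          · exact Finset.univ_nonempty (α := Fin n)
          · intro j _; exact h j
        simp [hsum] at this
      obtain ⟨j, hj⟩ := hex
      calc (1 : ℝ) ≤ bundleVal (c i) (X' j) := hj
        _ ≤ sSup (Set.range fun j => bundleVal (c i) (X' j)) :=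
          le_csSup (Set.finite_range _).bddAbove ⟨j, rfl⟩
    have h1n : 1/(n : ℝ) ≤ 1 := by
      rw [div_le_one hnpos]; exact hn1
    have hpos : (0 : ℝ) ≤ 2 - 1/(n : ℝ) := by linarith
    calc (2 : ℝ) - 1/(n : ℝ) = (2 - 1/(n : ℝ)) * 1 := (mul_one _).symm
      _ ≤ (2 - 1/(n : ℝ)) * MMSchores n M (c i) := mul_le_mul_of_nonneg_left hMMS hpos
end

section
/- For the √2-algorithm for chores with two agents: if at the arrival of item e* both agents would exceed the threshold, i.e., c_1(X_1 ∪ {e*}) > √2·α_1 and c_2(X_2 ∪ {e*}) > √2·α_2 where α_i ≥ max(1, c_i(e*)) and c_1(M) = c_2(M) = 2 with X_1 ∪ X_2 ∪ {e*} ⊆ M, and if moreover every item e' ∈ X_2 satisfies c_1(e') > √2·c_2(e'), then we derive a contradiction: c_1(X_2) < 2 − √2 implies c_2(X_2) < (2 − √2)/√2 = √2 − 1, hence c_2(X_2 ∪ {e*}) ≤ √2 − 1 + c_2(e*) ≤ √2·α_2, contradicting the assumption. -/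
open Finset

theorem stmt13 {ι : Type*} [DecidableEq ι] (M X1 X2 : Finset ι)
    (c1 c2 : ι → ℝ) (hc1 : ∀ e ∈ M, 0 ≤ c1 e) (hc2 : ∀ e ∈ M, 0 ≤ c2 e)
    (hn1 : bundleVal c1 M = 2) (hn2 : bundleVal c2 M = 2)
    (hX1 : X1 ⊆ M) (hX2 : X2 ⊆ M) (hdisj : Disjoint X1 X2)
    (estar : ι) (hestarM : estar ∈ M) (hestar : estar ∉ X1 ∪ X2)
    (α1 α2 : ℝ) (hα1 : 1 ≤ α1) (hα1' : c1 estar ≤ α1)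
    (hα2 : 1 ≤ α2) (hα2' : c2 estar ≤ α2)
    (h1 : Real.sqrt 2 * α1 < bundleVal c1 (insert estar X1))
    (h2 : Real.sqrt 2 * α2 < bundleVal c2 (insert estar X2))
    (hitems : ∀ e' ∈ X2, Real.sqrt 2 * c2 e' < c1 e') :
    False := by
  simp only [Finset.mem_union, not_or] at hestar
  obtain ⟨he1, he2⟩ := hestar
  have hdis : Disjoint (insert estar X1) X2 := by
    rw [Finset.disjoint_insert_left]; exact ⟨he2, hdisj⟩
  have hsub : (insert estar X1) ∪ X2 ⊆ M := by
    intro x hx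
    rcases Finset.mem_union.1 hx with h | h
    · rcases Finset.mem_insert.1 h with rfl | h
      · exact hestarM
      · exact hX1 h
    · exact hX2 h
  have key : bundleVal c1 (insert estar X1) + bundleVal c1 X2 ≤ 2 := by
    rw [← hn1]
    unfold bundleVal
    rw [← Finset.sum_union hdis]
    exact Finset.sum_le_sum_of_subset_of_nonneg hsub (fun e he _ => hc1 e he)
  have h22 : Real.sqrt 2 * bundleVal c2 X2 ≤ bundleVal c1 X2 := by
    unfold bundleVal
    rw [Finset.mul_sum]
    exact Finset.sum_le_sum fun e he => (hitems e he).le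
  have hins2 : bundleVal c2 (insert estar X2) = c2 estar + bundleVal c2 X2 := by
    unfold bundleVal
    rw [Finset.sum_insert he2]
  have hs : Real.sqrt 2 * Real.sqrt 2 = 2 := Real.mul_self_sqrt (by norm_num)
  have hs1 : (1:ℝ) ≤ Real.sqrt 2 := by
    nlinarith [Real.sqrt_nonneg 2]
  nlinarith [h1, h2, key, h22, hins2, mul_le_mul_of_nonneg_left hα1 (by positivity : (0:ℝ) ≤ Real.sqrt 2), mul_le_mul_of_nonneg_left hα2 (by positivity : (0:ℝ) ≤ Real.sqrt 2)]
end

section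
/- Monotone-goods algorithm phase-2 invariant: let A* be a set of agents with thresholds β_i > 0 and let (X_i)_{i ∈ A*} be bundles built from items each of value at most β_i to agent i, allocated greedily so that each item e' put into X_i satisfies v_i(e')/β_i ≥ v_j(e')/β_j for every other relevant agent j. If agent i became inactive when v_i(X_i) first reached β_i (so v_i(X_i) < 2β_i), then for any other agent j, v_j(X_i) ≤ (β_j/β_i)·v_i(X_i) < 2β_j. -/
open Finset

theorem stmt16 {ι : Type*} [DecidableEq ι] (X : Finset ι) (vi vj : ι → ℝ)
    (βi βj : ℝ) (hβi : 0 < βi) (hβj : 0 < βj)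
    (hitems : ∀ e ∈ X, vi e ≤ βi)
    (hlast : ∃ e ∈ X, bundleVal vi (X.erase e) < βi)
    (hgreedy : ∀ e ∈ X, vj e / βj ≤ vi e / βi) :
    bundleVal vj X ≤ (βj / βi) * bundleVal vi X ∧ bundleVal vj X < 2 * βj := by
  have h1 : bundleVal vj X ≤ (βj / βi) * bundleVal vi X := by
    unfold bundleVal
    rw [Finset.mul_sum]
    apply Finset.sum_le_sum
    intro e he
    have := hgreedy e he
    rw [div_le_div_iff₀ hβj hβi] at this
    rw [div_mul_eq_mul_div, le_div_iff₀ hβi]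
    linarith
  have h2 : bundleVal vi X < 2 * βi := by
    obtain ⟨e, he, hlt⟩ := hlast
    have : bundleVal vi X = bundleVal vi (X.erase e) + vi e := by
      unfold bundleVal
      rw [Finset.sum_erase_add _ _ he]
    rw [this]
    have := hitems e he
    linarith
  refine ⟨h1, lt_of_le_of_lt h1 ?_⟩
  calc (βj / βi) * bundleVal vi X < (βj / βi) * (2 * βi) := by
        apply mul_lt_mul_of_pos_left h2 (div_pos hβj hβi)
    _ = 2 * βj := by field_simp
end

section
/- Without normalization, no deterministic online algorithm for allocating goods to two agents has a competitive ratio strictly greater than 0: for every γ ∈ (0,1] and every r > 1/γ, in the three-item instance with values v_1 = (1, r, r), v_2 = (1, 1/r, 1), if the algorithm gives item 1 to agent 1 and item 2 to agent 2 (which any γ-competitive algorithm must do), then MMS_1 = r, MMS_2 = 1, and before item 3 arrives v_1(X_1) = 1 = (1/r)·MMS_1 and v_2(X_2) = 1/r = (1/r)·MMS_2; whichever agent fails to receive item 3 has value less than γ·MMS. -/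
open Finset

lemma range_two (f : Fin 2 → ℝ) : Set.range f = {f 0, f 1} := by
  ext x; simp [Fin.exists_fin_two, eq_comm]

lemma sInf_range_two (f : Fin 2 → ℝ) : sInf (Set.range f) = min (f 0) (f 1) := by
  rw [range_two, csInf_pair]

lemma small_bundle_le {v : Fin 3 → ℝ} {M : ℝ} (hM : 0 ≤ M) (hv : ∀ e, v e ≤ M)
    {S : Finset (Fin 3)} (hS : S.card ≤ 1) : bundleVal v S ≤ M := by
  have h1 : bundleVal v S ≤ S.card • M :=
    Finset.sum_le_card_nsmul S v M (fun e _ => hv e)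
  refine h1.trans ?_
  interval_cases h : S.card <;> simp [hM]

lemma part_min_le {v : Fin 3 → ℝ} {M : ℝ} (hM : 0 ≤ M) (hv : ∀ e, v e ≤ M)
    {X : Fin 2 → Finset (Fin 3)} (hX : IsPartition Finset.univ X) :
    min (bundleVal v (X 0)) (bundleVal v (X 1)) ≤ M := by
  have hdisj : Disjoint (X 0) (X 1) := hX.1 (by decide)
  have hu : X 0 ∪ X 1 = (Finset.univ : Finset (Fin 3)) := by
    rw [← hX.2]; ext e; simp [Fin.exists_fin_two]
  have hcard : (X 0).card + (X 1).card = 3 := by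
    rw [← Finset.card_union_of_disjoint hdisj, hu]; simp
  rcases le_or_gt ((X 0).card) 1 with h | h
  · exact (min_le_left _ _).trans (small_bundle_le hM hv h)
  · exact (min_le_right _ _).trans (small_bundle_le hM hv (by omega))

lemma mms_eq {v : Fin 3 → ℝ} {M : ℝ} (hM : 0 ≤ M) (hv : ∀ e, v e ≤ M)
    (X : Fin 2 → Finset (Fin 3)) (hX : IsPartition (Finset.univ : Finset (Fin 3)) X)
    (hval : min (bundleVal v (X 0)) (bundleVal v (X 1)) = M) :
    MMSgoods 2 (Finset.univ : Finset (Fin 3)) v = M := by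
  have hub : ∀ x ∈ {x : ℝ | ∃ X : Fin 2 → Finset (Fin 3),
      IsPartition (Finset.univ : Finset (Fin 3)) X ∧
      x = sInf (Set.range fun j => bundleVal v (X j))}, x ≤ M := by
    rintro x ⟨X', hX', rfl⟩
    rw [sInf_range_two]
    exact part_min_le hM hv hX'
  have hmem : M ∈ {x : ℝ | ∃ X : Fin 2 → Finset (Fin 3),
      IsPartition (Finset.univ : Finset (Fin 3)) X ∧
      x = sInf (Set.range fun j => bundleVal v (X j))} :=
    ⟨X, hX, by rw [sInf_range_two, hval]⟩
  exact le_antisymm (csSup_le ⟨M, hmem⟩ hub) (le_csSup ⟨M, hub⟩ hmem)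

theorem stmt18 (γ r : ℝ) (hγ0 : 0 < γ) (hγ1 : γ ≤ 1) (hr : 1/γ < r) :
    let v1 : Fin 3 → ℝ := ![1, r, r]
    let v2 : Fin 3 → ℝ := ![1, 1/r, 1]
    MMSgoods 2 (Finset.univ : Finset (Fin 3)) v1 = r ∧
    MMSgoods 2 (Finset.univ : Finset (Fin 3)) v2 = 1 ∧
    bundleVal v1 {0} = (1/r) * MMSgoods 2 (Finset.univ : Finset (Fin 3)) v1 ∧
    bundleVal v2 {1} = (1/r) * MMSgoods 2 (Finset.univ : Finset (Fin 3)) v2 ∧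
    bundleVal v1 {0} < γ * MMSgoods 2 (Finset.univ : Finset (Fin 3)) v1 ∧
    bundleVal v2 {1} < γ * MMSgoods 2 (Finset.univ : Finset (Fin 3)) v2 := by
  intro v1 v2
  have h1γ : 1 ≤ 1/γ := one_le_one_div hγ0 hγ1
  have hr1 : 1 < r := lt_of_le_of_lt h1γ hr
  have hr0 : 0 < r := lt_trans one_pos hr1
  have hγr : 1 < γ * r := by
    have := (div_lt_iff₀ hγ0).mp hr
    linarith [mul_comm r γ]
  -- MMS for v1
  have hv1 : MMSgoods 2 (Finset.univ : Finset (Fin 3)) v1 = r := by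
    refine mms_eq (le_of_lt hr0) ?_ ![{1}, {0, 2}] ?_ ?_
    · intro e; fin_cases e <;> simp [v1] <;> linarith
    · refine ⟨fun i j hij => ?_, by decide⟩
      fin_cases i <;> fin_cases j <;> simp_all <;> decide
    · have h0 : bundleVal v1 {1} = r := by simp [bundleVal, v1]
      have h1 : bundleVal v1 ({0, 2} : Finset (Fin 3)) = 1 + r := by
        simp [bundleVal, v1, Finset.sum_pair (by decide : (0 : Fin 3) ≠ 2)]
      simp only [Matrix.cons_val_zero, Matrix.cons_val_one, Matrix.head_cons, h0, h1]
      exact min_eq_left (by linarith)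
  -- MMS for v2
  have hv2 : MMSgoods 2 (Finset.univ : Finset (Fin 3)) v2 = 1 := by
    refine mms_eq zero_le_one ?_ ![{0}, {1, 2}] ?_ ?_
    · intro e
      have : r⁻¹ ≤ 1 := inv_le_one_of_one_le₀ hr1.le
      fin_cases e <;> simp [v2] <;> linarith
    · refine ⟨fun i j hij => ?_, by decide⟩
      fin_cases i <;> fin_cases j <;> simp_all <;> decide
    · have h0 : bundleVal v2 {0} = 1 := by simp [bundleVal, v2]
      have h1 : bundleVal v2 ({1, 2} : Finset (Fin 3)) = 1/r + 1 := by
        simp [bundleVal, v2, Finset.sum_pair (by decide : (1 : Fin 3) ≠ 2)]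
      simp only [Matrix.cons_val_zero, Matrix.cons_val_one, Matrix.head_cons, h0, h1]
      have := div_pos one_pos hr0
      refine min_eq_left (by linarith)
  have hb1 : bundleVal v1 {0} = 1 := by simp [bundleVal, v1]
  have hb2 : bundleVal v2 {1} = 1/r := by simp [bundleVal, v2]
  refine ⟨hv1, hv2, ?_, ?_, ?_, ?_⟩
  · rw [hv1, hb1]; field_simp
  · rw [hv2, hb2]; ring
  · rw [hv1, hb1]; linarith
  · rw [hv2, hb2]
    rw [div_lt_iff₀ hr0]
    linarith [mul_comm γ r]
end

section
/- In the 15/11 lower bound for two-agent chores (instance of Table with items e_1..e_4 having costs c_1 = (4/11, 4/11, 7/11, 7/11) and c_2 = (4/11, 3/11, 7/11, 8/11)): MMS_1 = MMS_2 = 1, and if items e_1, e_2 are both in one bundle of agent 1, then for every way of assigning e_3 and e_4, some agent i has c_i(X_i) ≥ 15/11. -/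
open Finset

lemma range_fin2 (g : Fin 2 → ℝ) : Set.range g = {g 0, g 1} := by
  ext x
  simp [Fin.exists_fin_two, eq_comm]

lemma mms_eq_one (c : Fin 4 → ℝ)
    (h02 : bundleVal c {0, 2} = 1) (h13 : bundleVal c {1, 3} = 1)
    (htot : bundleVal c Finset.univ = 2) :
    MMSchores 2 (Finset.univ : Finset (Fin 4)) c = 1 := by
  set S := {x : ℝ | ∃ X : Fin 2 → Finset (Fin 4), IsPartition Finset.univ X ∧
    x = sSup (Set.range fun j => bundleVal c (X j))} with hS
  have hmem : (1 : ℝ) ∈ S := by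
    refine ⟨![{0, 2}, {1, 3}], ⟨?_, ?_⟩, ?_⟩
    · intro i j hij
      fin_cases i <;> fin_cases j <;> simp_all
    · decide
    · rw [range_fin2, csSup_pair]
      show (1 : ℝ) = bundleVal c {0,2} ⊔ bundleVal c {1,3}
      rw [h02, h13]; simp
  have hlb : ∀ x ∈ S, (1 : ℝ) ≤ x := by
    rintro x ⟨X, ⟨hdisj, hun⟩, rfl⟩
    have hun2 : X 0 ∪ X 1 = Finset.univ := by
      rw [← hun]
      rw [show (Finset.univ : Finset (Fin 2)) = {0, 1} by decide]
      simp [Finset.biUnion_insert]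
    have hsum : bundleVal c (X 0) + bundleVal c (X 1) = 2 := by
      have hd : Disjoint (X 0) (X 1) := hdisj (by decide : (0 : Fin 2) ≠ 1)
      rw [← htot, ← hun2]
      exact (Finset.sum_union hd).symm
    rw [range_fin2, csSup_pair, le_sup_iff]
    rcases le_total (bundleVal c (X 0)) (bundleVal c (X 1)) with h | h
    · right; linarith
    · left; linarith
  refine le_antisymm (csInf_le ⟨1, fun x hx => hlb x hx⟩ hmem) (le_csInf ⟨1, hmem⟩ hlb)

theorem stmt19 :
    let c1 : Fin 4 → ℝ := ![4/11, 4/11, 7/11, 7/11]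
    let c2 : Fin 4 → ℝ := ![4/11, 3/11, 7/11, 8/11]
    MMSchores 2 (Finset.univ : Finset (Fin 4)) c1 = 1 ∧
    MMSchores 2 (Finset.univ : Finset (Fin 4)) c2 = 1 ∧
    ∀ X1 X2 : Finset (Fin 4), Disjoint X1 X2 → X1 ∪ X2 = Finset.univ →
      0 ∈ X1 → 1 ∈ X1 →
      15/11 ≤ bundleVal c1 X1 ∨ 15/11 ≤ bundleVal c2 X2 := by
  intro c1 c2
  have hc1nn : ∀ i, 0 ≤ c1 i := by intro i; fin_cases i <;> norm_num [c1]
  have hc2nn : ∀ i, 0 ≤ c2 i := by intro i; fin_cases i <;> norm_num [c2]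
  refine ⟨?_, ?_, ?_⟩
  · apply mms_eq_one <;> simp [bundleVal, c1, Fin.sum_univ_four] <;> norm_num
  · apply mms_eq_one <;> simp [bundleVal, c2, Fin.sum_univ_four] <;> norm_num
  · intro X1 X2 hd hu h0 h1
    have hmono : ∀ (c : Fin 4 → ℝ), (∀ i, 0 ≤ c i) → ∀ (T S : Finset (Fin 4)), T ⊆ S →
        bundleVal c T ≤ bundleVal c S := fun c hc T S hTS =>
      Finset.sum_le_sum_of_subset_of_nonneg hTS (fun i _ _ => hc i)
    by_cases h2 : (2 : Fin 4) ∈ X1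
    · left
      have hsub : ({0, 1, 2} : Finset (Fin 4)) ⊆ X1 := by
        intro i hi; fin_cases hi <;> assumption
      calc (15:ℝ)/11 = bundleVal c1 {0, 1, 2} := by
            simp [bundleVal, c1]; norm_num
        _ ≤ bundleVal c1 X1 := hmono c1 hc1nn _ _ hsub
    · by_cases h3 : (3 : Fin 4) ∈ X1
      · left
        have hsub : ({0, 1, 3} : Finset (Fin 4)) ⊆ X1 := by
          intro i hi; fin_cases hi <;> assumption
        calc (15:ℝ)/11 = bundleVal c1 {0, 1, 3} := by
              simp [bundleVal, c1]; norm_num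
          _ ≤ bundleVal c1 X1 := hmono c1 hc1nn _ _ hsub
      · right
        have h2' : (2 : Fin 4) ∈ X2 := by
          have := Finset.mem_univ (2 : Fin 4)
          rw [← hu, Finset.mem_union] at this; tauto
        have h3' : (3 : Fin 4) ∈ X2 := by
          have := Finset.mem_univ (3 : Fin 4)
          rw [← hu, Finset.mem_union] at this; tauto
        have hsub : ({2, 3} : Finset (Fin 4)) ⊆ X2 := by
          intro i hi; fin_cases hi <;> assumption
        calc (15:ℝ)/11 = bundleVal c2 {2, 3} := by
              simp [bundleVal, c2]; norm_num
          _ ≤ bundleVal c2 X2 := hmono c2 hc2nn _ _ hsub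
end
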